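/- For every integer k ≥ 1 and real p > 0 with kp ≥ 1, the Gamma function satisfies Γ(kp)^{1/k} ≤ (kp)^p. -/
import Mathlib

lemma gamma_le_self_rpow {x : ℝ} (hx : 1 ≤ x) : Real.Gamma x ≤ x ^ x := by
  have h1 : (1:ℝ) ≤ x ^ x := Real.one_le_rpow hx (by linarith)
  rcases le_or_gt x 2 with h2 | h2
  · -- convexity on [1,2]
    have hconv := Real.convexOn_Gamma
    have := hconv.2 (show (1:ℝ) ∈ Set.Ioi 0 by norm_num)
      (show (2:ℝ) ∈ Set.Ioi 0 by norm_num)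
      (show (0:ℝ) ≤ 2 - x by linarith) (show (0:ℝ) ≤ x - 1 by linarith)
      (show (2 - x) + (x - 1) = 1 by ring)
    simp only [smul_eq_mul, Real.Gamma_one, Real.Gamma_two, mul_one] at this
    have hx' : (2 - x) + (x - 1) * 2 = x := by ring
    rw [hx'] at this
    calc Real.Gamma x ≤ (2 - x) + (x - 1) := by linarith
      _ = 1 := by ring
      _ ≤ x ^ x := h1
  · set n : ℕ := ⌈x⌉₊ with hn
    have hxn : x ≤ n := Nat.le_ceil x
    have hn3 : 3 ≤ n := by
      have : (2:ℝ) < n := lt_of_lt_of_le h2 hxn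
      exact_mod_cast Nat.lt_of_lt_of_le (by exact_mod_cast this) le_rfl
    have hnx : (n : ℝ) ≤ x + 1 := by
      have := Nat.ceil_lt_add_one (by linarith : (0:ℝ) ≤ x)
      linarith
    have hmono := Real.Gamma_strictMonoOn_Ici.monotoneOn
    have h1' : Real.Gamma x ≤ Real.Gamma n := by
      refine hmono (by simpa using h2.le) ?_ hxn
      simp only [Set.mem_Ici]
      exact le_trans h2.le hxn
    have hGn : Real.Gamma n = Nat.factorial (n-1) := by
      have : (n:ℝ) = ((n-1 : ℕ) : ℝ) + 1 := by
        have : 1 ≤ n := by omega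
        push_cast [Nat.cast_sub this]
        ring
      rw [this, Real.Gamma_nat_eq_factorial]
    have hfact : (Nat.factorial (n-1) : ℝ) ≤ ((n-1 : ℕ) : ℝ) ^ (n-1 : ℕ) := by
      exact_mod_cast (Nat.factorial_le_pow (n-1))
    have hpow : ((n-1 : ℕ) : ℝ) ^ (n-1 : ℕ) ≤ x ^ (n-1 : ℕ) := by
      apply pow_le_pow_left₀ (by positivity)
      push_cast [Nat.cast_sub (by omega : 1 ≤ n)]
      linarith
    have hrpow : x ^ (n-1 : ℕ) ≤ x ^ x := by
      rw [← Real.rpow_natCast x (n-1)]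
      apply Real.rpow_le_rpow_of_exponent_le hx
      push_cast [Nat.cast_sub (by omega : 1 ≤ n)]
      linarith
    calc Real.Gamma x ≤ (Nat.factorial (n-1) : ℝ) := by rw [← hGn]; exact h1'
      _ ≤ x ^ (n-1:ℕ) := le_trans hfact hpow
      _ ≤ x ^ x := hrpow

theorem gamma_root_le (k : ℕ) (p : ℝ) (hk : 1 ≤ k) (hp : 0 < p)
    (hkp : 1 ≤ (k : ℝ) * p) :
    Real.Gamma ((k : ℝ) * p) ^ ((1 : ℝ) / k) ≤ ((k : ℝ) * p) ^ p := by
  have hk0 : (0:ℝ) < k := by exact_mod_cast hk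
  have h := gamma_le_self_rpow hkp
  have hG : 0 ≤ Real.Gamma ((k:ℝ) * p) := (Real.Gamma_pos_of_pos (by positivity)).le
  have := Real.rpow_le_rpow hG h (by positivity : (0:ℝ) ≤ 1 / k)
  rw [← Real.rpow_mul (by positivity)] at this
  have he : (k:ℝ) * p * (1 / k) = p := by field_simp
  rwa [he] at this
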